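/- arXiv:2206.15091 — 2 statements merged into one kernel-verified Lean document; each statement's English description precedes it below -/
import Mathlib

section
/- For every positive integer r ≥ 1, the 0-tree-cut width of the star S_{r^2} (the complete bipartite graph K_{1,r^2}) is at least r. -/
open scoped Classical

noncomputable section

namespace PaperSTCW

open SimpleGraph Finset

/-- Degree of a vertex in a multiset of edges over `Sym2 W`, loops counting twice. -/
def mdeg {W : Type} (E : Multiset (Sym2 W)) (v : W) : ℕ :=
  (E.map fun e => if e = Sym2.diag v then 2 else if v ∈ e then 1 else 0).sum

/-- Remove the edges incident to `v` and, if `lift = true` and `v` was incident to exactly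
two non-loop edges, add the lifted edge between their other endpoints
(this is the edge replacement performed when suppressing a degree-2 vertex). -/
def nextE {W : Type} (lift : Bool) (v : W) (E : Multiset (Sym2 W)) : Multiset (Sym2 W) :=
  E.filter (fun e => v ∉ e) +
    (if lift then
      (match (E.filter (fun e => v ∈ e)).toList.map
          (fun e => if hm : v ∈ e then Sym2.Mem.other hm else v) with
        | [a, b] => ({s(a, b)} : Multiset (Sym2 W))
        | _ => 0)
     else 0)

/-- Exhaustively delete (and, when `lift = true`, suppress) vertices outside `X` of degree
at most `d` from the multigraph with vertex set `S` and edge multiset `E`;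
returns the surviving vertex set. -/
def reduce {W : Type} (X : Finset W) (d : ℕ) (lift : Bool)
    (S : Finset W) (E : Multiset (Sym2 W)) : Finset W :=
  if h : ∃ v, v ∈ S ∧ v ∉ X ∧ mdeg E v ≤ d then
    reduce X d lift (S.erase h.choose) (nextE lift h.choose E)
  else S
termination_by S.card
decreasing_by exact Finset.card_erase_lt_of_mem h.choose_spec.1

/-- A tree-cut decomposition of `G`: a rooted tree together with a near-partition of the
vertices of `G` into bags (each vertex lies in exactly one bag; bags may be empty). -/
structure TCD {V : Type} [Fintype V] (G : SimpleGraph V) where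
  n : ℕ
  T : SimpleGraph (Fin n)
  tree : T.IsTree
  root : Fin n
  bag : Fin n → Finset V
  partition : ∀ v : V, ∃! t, v ∈ bag t

variable {V : Type} [Fintype V] {G : SimpleGraph V}

/-- The set of nodes in the subtree rooted at `t` (those nodes all of whose walks
from the root pass through `t`). -/
def TCD.desc (D : TCD G) (t : Fin D.n) : Set (Fin D.n) :=
  {s | ∀ p : D.T.Walk D.root s, t ∈ p.support}

/-- The union of the bags of the subtree rooted at `t`. -/
def TCD.Y (D : TCD G) (t : Fin D.n) : Finset V :=
  Finset.univ.filter fun v => ∃ s, s ∈ D.desc t ∧ v ∈ D.bag s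

/-- Adhesion of a node: the number of edges of `G` with exactly one endpoint in `Y t`. -/
def TCD.adh (D : TCD G) (t : Fin D.n) : ℕ :=
  ((Finset.univ : Finset (Sym2 V)).filter fun e =>
    e ∈ G.edgeSet ∧ ∃ a b, e = s(a, b) ∧ a ∈ D.Y t ∧ b ∉ D.Y t).card

/-- The connected components of `T - t`. -/
def TCD.Cmp (D : TCD G) (t : Fin D.n) : Type :=
  (SimpleGraph.induce {s | s ≠ t} D.T).ConnectedComponent

instance (D : TCD G) (t : Fin D.n) : Fintype (D.Cmp t) := by
  unfold TCD.Cmp; infer_instance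

/-- The consolidation map of the torso at `t`: vertices of the bag of `t` are kept,
all vertices in the bags of a fixed connected component of `T - t` are consolidated
into a single vertex. -/
def TCD.toTorso (D : TCD G) (t : Fin D.n) (v : V) : V ⊕ D.Cmp t :=
  if h : ∃ s, s ≠ t ∧ v ∈ D.bag s then
    Sum.inr ((SimpleGraph.induce {s | s ≠ t} D.T).connectedComponentMk
      ⟨h.choose, h.choose_spec.1⟩)
  else Sum.inl v

/-- Vertex set of the torso at `t`. -/
def TCD.torsoS (D : TCD G) (t : Fin D.n) : Finset (V ⊕ D.Cmp t) :=
  ((D.bag t).image Sum.inl) ∪ (Finset.univ.image Sum.inr)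

/-- Edge multiset of the torso at `t` (consolidation keeps multiplicities and drops loops). -/
def TCD.torsoE (D : TCD G) (t : Fin D.n) : Multiset (Sym2 (V ⊕ D.Cmp t)) :=
  (((Finset.univ : Finset (Sym2 V)).filter fun e => e ∈ G.edgeSet).val.map
      (Sym2.map (D.toTorso t))).filter fun e => ¬ e.IsDiag

/-- Torso-size: the order of the 3-center of the torso at `t`, obtained by exhaustively
suppressing vertices outside the bag of degree at most 2. -/
def TCD.tor (D : TCD G) (t : Fin D.n) : ℕ :=
  (reduce ((D.bag t).image Sum.inl) 2 true (D.torsoS t) (D.torsoE t)).card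

/-- The order of the 2-center of the torso at `t`, obtained by exhaustively deleting
vertices outside the bag of degree at most 1. -/
def TCD.tor2 (D : TCD G) (t : Fin D.n) : ℕ :=
  (reduce ((D.bag t).image Sum.inl) 1 false (D.torsoS t) (D.torsoE t)).card

/-- The order of the 1-center of the torso at `t`, obtained by deleting isolated
vertices outside the bag. -/
def TCD.tor1 (D : TCD G) (t : Fin D.n) : ℕ :=
  (reduce ((D.bag t).image Sum.inl) 0 false (D.torsoS t) (D.torsoE t)).card

/-- Width of a tree-cut decomposition. -/
def TCD.width (D : TCD G) : ℕ := Finset.univ.sup fun t => max (D.adh t) (D.tor t)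

/-- Slim width of a tree-cut decomposition. -/
def TCD.slimWidth (D : TCD G) : ℕ := Finset.univ.sup fun t => max (D.adh t) (D.tor2 t)

/-- 0-width of a tree-cut decomposition. -/
def TCD.zeroWidth (D : TCD G) : ℕ := Finset.univ.sup fun t => max (D.adh t) (D.tor1 t)

/-- Tree-cut width. -/
def tcw {V : Type} [Fintype V] (G : SimpleGraph V) : ℕ :=
  sInf {k | ∃ D : TCD G, D.width ≤ k}

/-- Slim tree-cut width. -/
def stcw {V : Type} [Fintype V] (G : SimpleGraph V) : ℕ :=
  sInf {k | ∃ D : TCD G, D.slimWidth ≤ k}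

/-- 0-tree-cut width. -/
def tcw0 {V : Type} [Fintype V] (G : SimpleGraph V) : ℕ :=
  sInf {k | ∃ D : TCD G, D.zeroWidth ≤ k}


/-! ### Bundled finite graphs and weak immersions -/

structure FG where
  V : Type
  [fin : Fintype V]
  G : SimpleGraph V

attribute [instance] FG.fin

/-- One step of obtaining a graph from another: an isomorphic copy, deleting an edge,
deleting a vertex, or lifting a pair of incident edges `(x,y), (y,z)` (deleting them
and adding the edge `(x,z)`). `ImmStep B A` means `B` is obtained from `A`. -/
inductive ImmStep : FG → FG → Prop
  | iso (A B : FG) : (Nonempty (B.G ≃g A.G)) → ImmStep B A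
  | delEdge (A : FG) (e : Sym2 A.V) (he : e ∈ A.G.edgeSet) :
      ImmStep (FG.mk A.V (A.G.deleteEdges {e})) A
  | delVertex (A : FG) (v : A.V) :
      ImmStep (FG.mk {w : A.V // w ≠ v} (SimpleGraph.induce {w : A.V | w ≠ v} A.G)) A
  | lift (A : FG) (x y z : A.V) (hxy : A.G.Adj x y) (hyz : A.G.Adj y z) (hxz : x ≠ z) :
      ImmStep (FG.mk A.V (SimpleGraph.fromEdgeSet
        ((A.G.edgeSet \ {s(x, y), s(y, z)}) ∪ {s(x, z)}))) A

/-- `Immersion H G` : `G` contains `H` as a weak immersion, i.e. `H` can be obtained from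
`G` by a sequence of edge deletions, vertex deletions and liftings. -/
def Immersion (H G : FG) : Prop := Relation.ReflTransGen ImmStep H G

/-- `H` consists of `m` cycles intersecting in one vertex and otherwise pairwise
vertex-disjoint. -/
def IsFlower (m : ℕ) {W : Type} [Fintype W] (H : SimpleGraph W) : Prop :=
  H.Connected ∧ ∃ c : W, H.degree c = 2 * m ∧ ∀ v : W, v ≠ c → H.degree v = 2

/-- `H` consists of `m` paths with the same two endpoints which are otherwise pairwise
vertex-disjoint. -/
def IsTheta (m : ℕ) {W : Type} [Fintype W] (H : SimpleGraph W) : Prop :=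
  H.Connected ∧ ∃ x y : W, x ≠ y ∧ H.degree x = m ∧ H.degree y = m ∧
    (∀ v : W, v ≠ x → v ≠ y → H.degree v = 2) ∧
    (SimpleGraph.induce {v : W | v ≠ x} H).IsAcyclic ∧
    (SimpleGraph.induce {v : W | v ≠ y} H).IsAcyclic

/-- The star `K_{1,r}`. -/
def star (r : ℕ) : SimpleGraph (Fin 1 ⊕ Fin r) := completeBipartiteGraph (Fin 1) (Fin r)

/-- The windmill `W_r`: `r` triangles sharing one vertex, otherwise vertex-disjoint. -/
def windmill (r : ℕ) : SimpleGraph (Option (Fin r × Fin 2)) :=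
  SimpleGraph.fromRel (fun x y =>
    x = none ∨ ∃ (i : Fin r) (a b : Fin 2), x = some (i, a) ∧ y = some (i, b))

/-- `G` is the `k`-edge sum `G₁ ⊕ₖ G₂` at vertices `v₁, v₂` of degree `k`. -/
def IsEdgeSum {V₁ V₂ : Type} [Fintype V₁] [Fintype V₂] (k : ℕ)
    (G₁ : SimpleGraph V₁) (G₂ : SimpleGraph V₂) (v₁ : V₁) (v₂ : V₂)
    (G : SimpleGraph ({x : V₁ // x ≠ v₁} ⊕ {y : V₂ // y ≠ v₂})) : Prop :=
  G₁.degree v₁ = k ∧ G₂.degree v₂ = k ∧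
  ∃ π : V₁ → V₂, Set.BijOn π (G₁.neighborSet v₁) (G₂.neighborSet v₂) ∧
    (∀ a b : {x : V₁ // x ≠ v₁}, G.Adj (Sum.inl a) (Sum.inl b) ↔ G₁.Adj a b) ∧
    (∀ a b : {y : V₂ // y ≠ v₂}, G.Adj (Sum.inr a) (Sum.inr b) ↔ G₂.Adj a b) ∧
    (∀ (a : {x : V₁ // x ≠ v₁}) (b : {y : V₂ // y ≠ v₂}),
      G.Adj (Sum.inl a) (Sum.inr b) ↔ (G₁.Adj v₁ a ∧ π (a : V₁) = (b : V₂)))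

/-! ### Treewidth and maximum degree -/

/-- A tree decomposition of `G`. -/
structure TreeDecomp {V : Type} [Fintype V] (G : SimpleGraph V) where
  n : ℕ
  T : SimpleGraph (Fin n)
  tree : T.IsTree
  bag : Fin n → Finset V
  cover_v : ∀ v : V, ∃ t, v ∈ bag t
  cover_e : ∀ u v : V, G.Adj u v → ∃ t, u ∈ bag t ∧ v ∈ bag t
  coherent : ∀ v : V, (SimpleGraph.induce {t : Fin n | v ∈ bag t} T).Connected

/-- Width of a tree decomposition: maximum bag size minus one. -/
def TreeDecomp.width (D : TreeDecomp G) : ℕ :=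
  (Finset.univ.sup fun t => (D.bag t).card) - 1

/-- Treewidth. -/
def tw {V : Type} [Fintype V] (G : SimpleGraph V) : ℕ :=
  sInf {w | ∃ D : TreeDecomp G, D.width ≤ w}

/-- Maximum degree. -/
def maxDeg {V : Type} [Fintype V] (G : SimpleGraph V) : ℕ :=
  Finset.univ.sup fun v => G.degree v

/-! ### Edge-cut width, super edge-cut width, feedback edge number -/

/-- `T` is a maximal spanning forest of `G`. -/
def IsMSF {V : Type} (G T : SimpleGraph V) : Prop :=
  T ≤ G ∧ T.IsAcyclic ∧ ∀ u v : V, G.Adj u v → T.Reachable u v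

/-- The size of the local feedback edge set at `v`: edges of `G` outside `T` whose unique
`T`-path between their endpoints contains `v`. -/
def elocCard {V : Type} [Fintype V] (G T : SimpleGraph V) (v : V) : ℕ :=
  ((Finset.univ : Finset (Sym2 V)).filter fun e =>
    e ∈ G.edgeSet ∧ e ∉ T.edgeSet ∧
      ∃ a b : V, e = s(a, b) ∧ ∃ p : T.Walk a b, p.IsPath ∧ v ∈ p.support).card

/-- Edge-cut width of a pair `(G, T)`. -/
def ecwPair {V : Type} [Fintype V] (G T : SimpleGraph V) : ℕ :=
  1 + Finset.univ.sup fun v => elocCard G T v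

/-- Edge-cut width. -/
def ecw {V : Type} [Fintype V] (G : SimpleGraph V) : ℕ :=
  sInf {k | ∃ T : SimpleGraph V, IsMSF G T ∧ ecwPair G T ≤ k}

/-- Super edge-cut width: minimum edge-cut width over all supergraphs of `G`. -/
def secw {V : Type} [Fintype V] (G : SimpleGraph V) : ℕ :=
  sInf {k | ∃ (W : Type) (fW : Fintype W) (H : SimpleGraph W) (ι : V ↪ W),
    (∀ u v : V, G.Adj u v → H.Adj (ι u) (ι v)) ∧
    ∃ T : SimpleGraph W, IsMSF H T ∧ @ecwPair W fW H T ≤ k}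

/-- Feedback edge number: minimum number of edges whose deletion makes `G` a forest. -/
def fen {V : Type} [Fintype V] (G : SimpleGraph V) : ℕ :=
  sInf {m | ∃ F : Finset (Sym2 V), ↑F ⊆ G.edgeSet ∧ F.card = m ∧
    (G.deleteEdges ↑F).IsAcyclic}

/-! ### Nice decompositions -/

/-- The children of `t` in the rooted tree of `D`. -/
def TCD.children (D : TCD G) (t : Fin D.n) : Finset (Fin D.n) :=
  Finset.univ.filter fun s => D.T.Adj t s ∧ s ∈ D.desc t

/-- The neighborhood of a vertex set `S` in `G`. -/
def nbhd {V : Type} [Fintype V] (G : SimpleGraph V) (S : Finset V) : Finset V :=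
  Finset.univ.filter fun v => v ∉ S ∧ ∃ u ∈ S, G.Adj u v

/-- A non-root node is thin if its adhesion is at most 2. -/
def TCD.IsThin (D : TCD G) (t : Fin D.n) : Prop := t ≠ D.root ∧ D.adh t ≤ 2

/-- A tree-cut decomposition is nice if for every thin node `t`, `N(Y_t)` avoids the
sets `Y_b` of all siblings `b` of `t`. -/
def TCD.IsNice (D : TCD G) : Prop :=
  ∀ t : Fin D.n, D.IsThin t →
    ∀ p b : Fin D.n, t ∈ D.children p → b ∈ D.children p → b ≠ t →
      ∀ v ∈ nbhd G (D.Y t), v ∉ D.Y b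

/-- `B_t`: the thin children `b` of `t` with `|N(Y_b)| ≤ 2` and `N(Y_b) ⊆ X_t`. -/
def TCD.B (D : TCD G) (t : Fin D.n) : Finset (Fin D.n) :=
  (D.children t).filter fun b => (nbhd G (D.Y b)).card ≤ 2 ∧ nbhd G (D.Y b) ⊆ D.bag t

/-- `B_t^{(2)}`: the members of `B_t` of adhesion exactly 2. -/
def TCD.B2 (D : TCD G) (t : Fin D.n) : Finset (Fin D.n) :=
  (D.B t).filter fun b => D.adh b = 2

end PaperSTCW


namespace PaperSTCW

/-!
Let `w` be the 0-width of a decomposition and let the centre `c` of the star lie in the bag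
`X_t`. In the torso at `t` every leaf either stays in `X_t` or is consolidated into a component
vertex joined to `c`, so the images of the leaves survive in the 1-center next to `c`: there are
at most `w - 1` of them. The leaves consolidated into one component of `T - t` are joined to `c`
across the cut of a single subtree, so each image absorbs at most `w` leaves. Hence
`r² = deg c ≤ (w - 1) w < w²`; in fact this bounds the degree of any vertex of any graph.
-/

open SimpleGraph

section Reduce

variable {W : Type}

lemma one_le_mdeg_of_mem {E : Multiset (Sym2 W)} {v : W} {e : Sym2 W} (he : e ∈ E)
    (hv : v ∈ e) : 1 ≤ mdeg E v := by
  refine le_trans ?_ (Multiset.le_sum_of_mem (Multiset.mem_map_of_mem _ he))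
  split_ifs <;> omega

lemma mem_reduce_zero_false {X S : Finset W} {E : Multiset (Sym2 W)} {v : W}
    (hvS : v ∈ S) (hv : v ∈ X ∨ ∃ e ∈ E, v ∈ e) : v ∈ reduce X 0 false S E := by
  induction S, E using reduce.induct X 0 false with
  | case1 S E h ih =>
    obtain ⟨-, hwX, hw0⟩ := h.choose_spec
    have hw : ∀ e ∈ E, h.choose ∉ e := fun e he hwe => by
      have := one_le_mdeg_of_mem he hwe; omega
    rw [reduce, dif_pos h]
    apply ih
    · refine Finset.mem_erase.2 ⟨?_, hvS⟩
      rintro rfl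
      obtain hvX | ⟨e, he, hve⟩ := hv
      · exact hwX hvX
      · exact hw e he hve
    · obtain hvX | ⟨e, he, hve⟩ := hv
      · exact Or.inl hvX
      · refine Or.inr ⟨e, ?_, hve⟩
        simp only [nextE, Bool.false_eq_true, if_false, add_zero, Multiset.mem_filter]
        exact ⟨he, hw e he⟩
  | case2 S E h =>
    rwa [reduce, dif_neg h]

end Reduce

section RootedTree

variable {V : Type} [Fintype V] {G : SimpleGraph V} (D : TCD G)

def TCD.pth (s : Fin D.n) : D.T.Walk D.root s :=
  (D.tree.existsUnique_path D.root s).choose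

lemma TCD.pth_isPath (s : Fin D.n) : (D.pth s).IsPath :=
  (D.tree.existsUnique_path D.root s).choose_spec.1

lemma TCD.eq_pth_of_isPath {s : Fin D.n} {p : D.T.Walk D.root s} (hp : p.IsPath) :
    p = D.pth s :=
  (D.tree.existsUnique_path D.root s).choose_spec.2 p hp

lemma TCD.mem_desc_iff {u s : Fin D.n} : s ∈ D.desc u ↔ u ∈ (D.pth s).support := by
  refine ⟨fun h => h (D.pth s), fun h p => p.support_bypass_subset_support ?_⟩
  rwa [D.eq_pth_of_isPath p.bypass_isPath]

lemma TCD.self_mem_desc (t : Fin D.n) : t ∈ D.desc t :=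
  fun p => p.end_mem_support

lemma TCD.mem_pth_of_adj {a c u : Fin D.n} (h : D.T.Adj a c) (hu : u ∈ (D.pth a).support) :
    u ∈ (D.pth c).support ∨ (u = a ∧ D.pth a = (D.pth c).concat h.symm) := by
  by_cases ha : a ∈ (D.pth c).support
  · left
    rw [← D.eq_pth_of_isPath ((D.pth_isPath c).takeUntil ha)] at hu
    exact (D.pth c).support_takeUntil_subset_support ha hu
  · have hpa := (D.eq_pth_of_isPath ((D.pth_isPath c).concat ha h.symm)).symm
    rw [hpa, Walk.support_concat, List.mem_append, List.mem_singleton] at hu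
    exact hu.imp_right fun hua => ⟨hua, hpa⟩

/-- The subtrees of `t` and of its children are closed under walks avoiding `t`. -/
lemma TCD.mem_pth_of_walk {t u : Fin D.n}
    (hu : u = t ∨ ∃ h : D.T.Adj t u, D.pth u = (D.pth t).concat h)
    {a b : {s | s ≠ t}} (p : (induce {s | s ≠ t} D.T).Walk a b)
    (ha : u ∈ (D.pth a).support) : u ∈ (D.pth b).support := by
  induction p with
  | nil => exact ha
  | @cons a c b h q ih =>
    rcases D.mem_pth_of_adj h ha with hc | ⟨rfl, hpa⟩
    · exact ih hc
    · rcases hu with hat | ⟨h', hpt⟩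
      · exact absurd hat a.2
      · obtain ⟨htc, -⟩ := Walk.concat_inj (hpt.symm.trans hpa)
        exact absurd htc.symm c.2

lemma TCD.exists_child_mem_pth {t w : Fin D.n} (ht : t ∈ (D.pth w).support) (hw : w ≠ t) :
    ∃ s, (∃ h : D.T.Adj t s, D.pth s = (D.pth t).concat h) ∧ s ∈ (D.pth w).support := by
  set q := (D.pth w).dropUntil t ht
  have hq : ¬ q.Nil := Walk.not_nil_of_ne hw.symm
  have hsplit :
      ((((D.pth w).takeUntil t ht).concat (q.adj_snd hq)).append q.tail) = D.pth w := by
    rw [Walk.concat_append, Walk.cons_tail_eq _ hq, Walk.take_spec]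
  have hpre := D.eq_pth_of_isPath (hsplit ▸ D.pth_isPath w).of_append_left
  rw [D.eq_pth_of_isPath ((D.pth_isPath w).takeUntil ht)] at hpre
  exact ⟨q.snd, ⟨q.adj_snd hq, hpre.symm⟩, (D.pth w).support_dropUntil_subset_support ht
    (List.mem_of_mem_tail (Walk.snd_mem_tail_support hq))⟩

/-- The cut is that of `t` if the component contains the root, and otherwise that of the child
of `t` lying in the component. -/
lemma TCD.exists_desc_separating {t w₀ : Fin D.n} (hw₀ : w₀ ≠ t) :
    ∃ u, ∀ w (hw : w ≠ t), (induce {s | s ≠ t} D.T).Reachable ⟨w₀, hw₀⟩ ⟨w, hw⟩ →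
      (w ∈ D.desc u ↔ t ∉ D.desc u) := by
  by_cases ht : t ∈ (D.pth w₀).support
  · obtain ⟨s, hs, hsw₀⟩ := D.exists_child_mem_pth ht hw₀
    obtain ⟨h, hpth⟩ := hs
    have hst : s ∉ (D.pth t).support := by
      have := D.pth_isPath s
      rw [hpth, Walk.concat_isPath_iff] at this
      exact this.2
    refine ⟨s, fun w hw ⟨p⟩ => ?_⟩
    rw [D.mem_desc_iff, D.mem_desc_iff]
    exact iff_of_true (D.mem_pth_of_walk (Or.inr ⟨h, hpth⟩) p hsw₀) hst
  · refine ⟨t, fun w hw ⟨p⟩ => ?_⟩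
    rw [D.mem_desc_iff]
    exact iff_of_false (fun htw => ht (D.mem_pth_of_walk (Or.inl rfl) p.reverse htw))
      (not_not_intro (D.self_mem_desc t))

end RootedTree

section Torso

variable {V : Type} [Fintype V] {G : SimpleGraph V} (D : TCD G)

lemma TCD.toTorso_of_mem_bag {t : Fin D.n} {v : V} (hv : v ∈ D.bag t) :
    D.toTorso t v = Sum.inl v := by
  obtain ⟨s, -, huniq⟩ := D.partition v
  rw [TCD.toTorso, dif_neg]
  rintro ⟨w, hwt, hw⟩
  exact hwt ((huniq w hw).trans (huniq t hv).symm)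

lemma TCD.toTorso_eq_inl {t : Fin D.n} {x v : V} (h : D.toTorso t x = Sum.inl v) :
    x = v ∧ x ∈ D.bag t := by
  unfold TCD.toTorso at h
  split_ifs at h with hx
  obtain rfl := Sum.inl.inj h
  obtain ⟨s, hs, -⟩ := D.partition x
  refine ⟨rfl, ?_⟩
  by_contra hxt
  exact hx ⟨s, fun hst => hxt (hst ▸ hs), hs⟩

lemma TCD.toTorso_eq_inr {t : Fin D.n} {x : V} {κ : D.Cmp t} (h : D.toTorso t x = Sum.inr κ) :
    ∃ w, ∃ hw : w ≠ t, x ∈ D.bag w ∧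
      (induce {s | s ≠ t} D.T).connectedComponentMk ⟨w, hw⟩ = κ := by
  unfold TCD.toTorso at h
  split_ifs at h with hx
  exact ⟨hx.choose, hx.choose_spec.1, hx.choose_spec.2, Sum.inr.inj h⟩

lemma TCD.mem_Y_iff {u s : Fin D.n} {v : V} (hs : v ∈ D.bag s) : v ∈ D.Y u ↔ s ∈ D.desc u := by
  obtain ⟨w, -, huniq⟩ := D.partition v
  simp only [TCD.Y, Finset.mem_filter, Finset.mem_univ, true_and]
  refine ⟨fun ⟨x, hx, hvx⟩ => ?_, fun h => ⟨s, h, hs⟩⟩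
  rwa [(huniq x hvx).trans (huniq s hs).symm] at hx

lemma TCD.map_mem_torsoE {t : Fin D.n} {a b : V} (hab : G.Adj a b)
    (hne : D.toTorso t a ≠ D.toTorso t b) : s(D.toTorso t a, D.toTorso t b) ∈ D.torsoE t := by
  simp only [TCD.torsoE, Multiset.mem_filter, Sym2.mk_isDiag_iff]
  refine ⟨Multiset.mem_map.2 ⟨s(a, b), ?_, Sym2.map_mk _ _ _⟩, hne⟩
  simpa using hab

lemma TCD.card_le_tor1 (t : Fin D.n) (K : Finset (V ⊕ D.Cmp t))
    (hK : ∀ y ∈ K, y ∈ D.torsoS t ∧ (y ∈ (D.bag t).image Sum.inl ∨ ∃ e ∈ D.torsoE t, y ∈ e)) :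
    K.card ≤ D.tor1 t :=
  Finset.card_le_card fun y hy => mem_reduce_zero_false (hK y hy).1 (hK y hy).2

lemma TCD.adh_le_zeroWidth (t : Fin D.n) : D.adh t ≤ D.zeroWidth :=
  (le_max_left _ _).trans
    (Finset.le_sup (f := fun t => max (D.adh t) (D.tor1 t)) (Finset.mem_univ t))

lemma TCD.tor1_le_zeroWidth (t : Fin D.n) : D.tor1 t ≤ D.zeroWidth :=
  (le_max_right _ _).trans
    (Finset.le_sup (f := fun t => max (D.adh t) (D.tor1 t)) (Finset.mem_univ t))

/-- The edges from a vertex of the bag of `t` into a component `κ` of `T - t` all cross the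
cut of one subtree. -/
lemma TCD.card_neighbors_toTorso_eq_inr_le {t : Fin D.n} {c : V}
    (hc : c ∈ D.bag t) (κ : D.Cmp t) :
    ((G.neighborFinset c).filter fun x => D.toTorso t x = Sum.inr κ).card ≤ D.zeroWidth := by
  obtain ⟨⟨w₀, hw₀⟩, rfl⟩ := κ.exists_rep
  obtain ⟨u, hu⟩ := D.exists_desc_separating hw₀
  refine le_trans ?_ (D.adh_le_zeroWidth u)
  refine Finset.card_le_card_of_injOn (fun x => s(c, x)) (fun x hx => ?_) ?_
  · rw [Finset.mem_coe, Finset.mem_filter, mem_neighborFinset] at hx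
    obtain ⟨w, hw, hxw, hκ⟩ := D.toTorso_eq_inr hx.2
    have hsep := hu w hw (ConnectedComponent.exact hκ.symm)
    rw [← D.mem_Y_iff hxw, ← D.mem_Y_iff hc] at hsep
    rw [Finset.mem_coe, Finset.mem_filter]
    refine ⟨Finset.mem_univ _, hx.1, ?_⟩
    by_cases hcY : c ∈ D.Y u
    · exact ⟨c, x, rfl, hcY, fun hxY => hsep.1 hxY hcY⟩
    · exact ⟨x, c, Sym2.eq_swap, hsep.2 hcY, hcY⟩
  · intro x _ y _ hxy
    exact Sym2.congr_right.1 hxy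

lemma TCD.toTorso_mem_torsoS (t : Fin D.n) (v : V) : D.toTorso t v ∈ D.torsoS t := by
  cases h : D.toTorso t v with
  | inl w =>
    obtain ⟨rfl, hv⟩ := D.toTorso_eq_inl h
    exact Finset.mem_union_left _ (Finset.mem_image_of_mem _ hv)
  | inr κ => exact Finset.mem_union_right _ (Finset.mem_image_of_mem _ (Finset.mem_univ κ))

lemma TCD.toTorso_of_adj_mem_center {t : Fin D.n} {c x : V} (hc : c ∈ D.bag t)
    (hx : G.Adj c x) :
    D.toTorso t x ∈ (D.bag t).image Sum.inl ∨ ∃ e ∈ D.torsoE t, D.toTorso t x ∈ e := by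
  cases h : D.toTorso t x with
  | inl w =>
    obtain ⟨rfl, hxt⟩ := D.toTorso_eq_inl h
    exact Or.inl (Finset.mem_image_of_mem _ hxt)
  | inr κ =>
    have hne : D.toTorso t c ≠ D.toTorso t x := by
      rw [D.toTorso_of_mem_bag hc, h]; exact Sum.inl_ne_inr
    exact Or.inr ⟨_, D.map_mem_torsoE hx hne, h ▸ Sym2.mem_mk_right _ _⟩

theorem TCD.degree_lt_sq_zeroWidth (c : V) : G.degree c < D.zeroWidth ^ 2 := by
  obtain ⟨t, hct, -⟩ := D.partition c
  set N := G.neighborFinset c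
  have hc_notMem : D.toTorso t c ∉ N.image (D.toTorso t) := by
    simp only [Finset.mem_image, mem_neighborFinset, N, not_exists, not_and]
    intro x hx hfx
    rw [D.toTorso_of_mem_bag hct] at hfx
    exact hx.ne (D.toTorso_eq_inl hfx).1.symm
  have hcenter : (N.image (D.toTorso t)).card + 1 ≤ D.zeroWidth := by
    rw [← Finset.card_insert_of_notMem hc_notMem, ← Finset.image_insert]
    refine (D.card_le_tor1 t _ fun y hy => ?_).trans (D.tor1_le_zeroWidth t)
    obtain ⟨x, hx, rfl⟩ := Finset.mem_image.1 hy
    refine ⟨D.toTorso_mem_torsoS t x, ?_⟩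
    obtain rfl | hx := Finset.mem_insert.1 hx
    · rw [D.toTorso_of_mem_bag hct]
      exact Or.inl (Finset.mem_image_of_mem _ hct)
    · exact D.toTorso_of_adj_mem_center hct ((mem_neighborFinset _ _ _).1 hx)
  have hfiber : ∀ y ∈ N.image (D.toTorso t),
      (N.filter fun x => D.toTorso t x = y).card ≤ D.zeroWidth := by
    rintro (v | κ) -
    · refine (Finset.card_le_one.2 fun x hx y hy => ?_).trans (by omega)
      rw [Finset.mem_filter] at hx hy
      exact (D.toTorso_eq_inl hx.2).1.trans (D.toTorso_eq_inl hy.2).1.symm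
    · exact D.card_neighbors_toTorso_eq_inr_le hct κ
  have hdeg := Finset.card_le_mul_card_image N _ hfiber
  rw [card_neighborFinset_eq_degree] at hdeg
  nlinarith

end Torso

lemma degree_star_center (r : ℕ) : (star r).degree (Sum.inl 0) = r := by
  have : (star r).neighborFinset (Sum.inl 0) = Finset.univ.map Function.Embedding.inr := by
    ext (i | i) <;> rw [mem_neighborFinset] <;> simp [star]
  rw [← card_neighborFinset_eq_degree, this, Finset.card_map, Finset.card_univ, Fintype.card_fin]

def TCD.trivial {V : Type} [Fintype V] (G : SimpleGraph V) : TCD G where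
  n := 1
  T := ⊥
  tree := IsTree.of_subsingleton
  root := 0
  bag := fun _ => Finset.univ
  partition := fun v => ⟨0, Finset.mem_univ v, fun s _ => Subsingleton.elim s 0⟩

theorem stmt0_general (r : ℕ) : r ≤ tcw0 (star (r ^ 2)) := by
  refine le_csInf ⟨_, TCD.trivial _, le_rfl⟩ ?_
  rintro k ⟨D, hD⟩
  have h := D.degree_lt_sq_zeroWidth (Sum.inl 0)
  rw [degree_star_center] at h
  exact (lt_of_pow_lt_pow_left₀ 2 (Nat.zero_le _) h).le.trans hD

/-- For every r ≥ 1, tcw₀ of the star `S_{r²} = K_{1,r²}` is at least `r`. -/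
theorem stmt0 (r : ℕ) (hr : 1 ≤ r) : r ≤ tcw0 (star (r ^ 2)) :=
  stmt0_general r

end PaperSTCW
end
end

section
/- If a graph G has stcw(G) < r, then G does not contain as a weak immersion r^2 cycles intersecting at one common vertex which are otherwise pairwise vertex-disjoint. -/
open scoped Classical

noncomputable section

/-!
An edge set in which every vertex has even degree and some vertex `v` has degree at least `2r²`
is inherited backwards along every immersion step: a lifted edge `xz` is replaced by the path
`x y z`. The flower has such an edge set, hence so does `G`.

Now take a tree-cut decomposition of slim width `w` and the node `t` whose bag `X` contains `v`.
In the torso at `t` the image of the even edge set still has only even degrees, so every vertex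
it touches has degree at least 2 and survives in the 2-center. If `k` components of `T - t`
receive an edge from `v`, this gives `|X| + k ≤ w`. Each of those components receives at most `w`
edges from `v`, since they all cross one adhesion, and `v` has fewer than `|X|` neighbours in `X`.
Hence `deg v ≤ |X| - 1 + k w < w² < r²`.
-/

namespace SimpleGraph

variable {α : Type} {T : SimpleGraph α}

lemma reachable_induce_ne_iff {t : α} {u w : ({s | s ≠ t} : Set α)} :
    (T.induce {s | s ≠ t}).Reachable u w ↔ ∃ p : T.Walk u w, t ∉ p.support := by
  constructor
  · rintro ⟨q⟩
    refine ⟨q.map (Embedding.induce _).toHom, fun ht => ?_⟩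
    obtain ⟨x, -, hx⟩ := List.mem_map.mp ((Walk.support_map _ _) ▸ ht)
    exact x.2 hx
  · rintro ⟨p, hp⟩
    exact ⟨p.induce {s | s ≠ t} fun x hx hxt => hp (hxt ▸ hx)⟩

/-- The vertex `c` follows the last visit of `p` to `t`. -/
lemma Walk.exists_adj_walk_notMem_support {a b t : α} (p : T.Walk a b) (ht : t ∈ p.support)
    (hb : b ≠ t) : ∃ c ∈ p.support, T.Adj t c ∧ ∃ q : T.Walk c b, t ∉ q.support := by
  induction p with
  | nil => exact absurd (List.mem_singleton.mp ht).symm hb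
  | cons h p ih =>
    by_cases ht' : t ∈ p.support
    · obtain ⟨c, hc, hadj, q, hq⟩ := ih ht' hb
      exact ⟨c, List.mem_cons_of_mem _ hc, hadj, q, hq⟩
    · obtain rfl : t = _ := by simpa [ht'] using ht
      exact ⟨_, List.mem_cons_of_mem _ p.start_mem_support, h, p, ht'⟩

/-- In a forest, `t c` is a bridge, so any other neighbour `c'` of `t` can reach `c` only
through `t`. -/
lemma IsAcyclic.eq_of_adj_of_walk {t c c' : α} (hT : T.IsAcyclic) (hc : T.Adj t c)
    (hc' : T.Adj t c') (q : T.Walk c' c) (hq : t ∉ q.support) : c' = c := by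
  have := isBridge_iff_forall_walk_mem_edges.mp (isAcyclic_iff_forall_adj_isBridge.mp hT hc)
    (q.cons hc')
  rcases List.mem_cons.mp (Walk.edges_cons _ _ ▸ this) with h | h
  · exact (Sym2.congr_right.mp h).symm
  · exact absurd (q.fst_mem_support_of_mem_edges h) hq

end SimpleGraph

namespace PaperSTCW

open SimpleGraph Finset

section Multidegree

variable {α β : Type}

@[simp]
lemma mdeg_zero (u : α) : mdeg (0 : Multiset (Sym2 α)) u = 0 := rfl

/-- Counting loops twice makes the contribution of an edge uniform in its endpoints. -/
lemma mdeg_cons_mk (x y u : α) (E : Multiset (Sym2 α)) :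
    mdeg (s(x, y) ::ₘ E) u = (if x = u then 1 else 0) + (if y = u then 1 else 0) + mdeg E u := by
  simp only [mdeg, Multiset.map_cons, Multiset.sum_cons, Sym2.diag, Sym2.eq_iff, Sym2.mem_iff]
  congr 1
  by_cases hx : x = u <;> by_cases hy : y = u <;> simp [hx, hy, eq_comm]

lemma mdeg_add (E E' : Multiset (Sym2 α)) (u : α) : mdeg (E + E') u = mdeg E u + mdeg E' u := by
  simp [mdeg]

lemma mdeg_mono {E E' : Multiset (Sym2 α)} (h : E ≤ E') (u : α) : mdeg E u ≤ mdeg E' u := by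
  obtain ⟨E'', rfl⟩ := Multiset.le_iff_exists_add.mp h
  simp [mdeg_add]

lemma mdeg_eq_zero_iff {E : Multiset (Sym2 α)} {u : α} : mdeg E u = 0 ↔ ∀ e ∈ E, u ∉ e := by
  induction E using Multiset.induction_on with
  | empty => simp
  | cons e E ih =>
    induction e using Sym2.ind with
    | _ x y =>
      simp only [mdeg_cons_mk, Nat.add_eq_zero_iff, ite_eq_right_iff, ih, Multiset.mem_cons,
        forall_eq_or_imp, Sym2.mem_iff, not_or]
      grind

lemma mdeg_eq_card_filter {E : Multiset (Sym2 α)} (hE : ∀ e ∈ E, ¬ e.IsDiag) (u : α) :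
    mdeg E u = Multiset.card (E.filter (u ∈ ·)) := by
  induction E using Multiset.induction_on with
  | empty => simp
  | cons e E ih =>
    rw [Multiset.forall_mem_cons] at hE
    induction e using Sym2.ind with
    | _ x y =>
      have hxy : x ≠ y := hE.1
      rw [mdeg_cons_mk, ih hE.2, Multiset.filter_cons]
      by_cases hx : u = x <;> by_cases hy : u = y <;> simp_all [add_comm, eq_comm]

lemma mdeg_map_sym2Map [Fintype α] (f : α → β) (E : Multiset (Sym2 α)) (b : β) :
    mdeg (E.map (Sym2.map f)) b = ∑ u with f u = b, mdeg E u := by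
  induction E using Multiset.induction_on with
  | empty => simp
  | cons e E ih =>
    induction e using Sym2.ind with
    | _ x y =>
      simp only [Multiset.map_cons, Sym2.map_mk, mdeg_cons_mk, ih, Finset.sum_add_distrib,
        Finset.sum_ite_eq, Finset.mem_filter, Finset.mem_univ, true_and]

lemma even_mdeg_filter_not_isDiag_iff [DecidableEq α] {E : Multiset (Sym2 α)} {u : α} :
    Even (mdeg (E.filter fun e => ¬ e.IsDiag) u) ↔ Even (mdeg E u) := by
  induction E using Multiset.induction_on with
  | empty => simp
  | cons e E ih =>
    induction e using Sym2.ind with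
    | _ x y =>
      by_cases hxy : x = y
      · subst hxy
        rw [Multiset.filter_cons_of_neg _ (by simp), ih, mdeg_cons_mk]
        split_ifs <;> simp [parity_simps]
      · rw [Multiset.filter_cons_of_pos _ (by simpa using hxy), mdeg_cons_mk, mdeg_cons_mk]
        simp only [Nat.even_add, ih]

lemma mdeg_val_eq_card_filter_mk_mem [Fintype α] {F : Finset (Sym2 α)} (hF : ∀ e ∈ F, ¬ e.IsDiag)
    (v : α) : mdeg F.val v = #{u | s(v, u) ∈ F} := by
  rw [mdeg_eq_card_filter hF, ← Finset.filter_val, ← Finset.card_def]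
  symm
  refine card_nbij (fun u => s(v, u)) (fun u hu => ?_) (fun u _ u' _ h => Sym2.congr_right.mp h)
    (fun e he => ?_)
  · simpa using hu
  · obtain ⟨heF, hve⟩ := mem_filter.mp he
    obtain ⟨u, rfl⟩ := Sym2.mem_iff_exists.mp hve
    exact ⟨u, by simpa using heF, rfl⟩

/-- Pruning vertices of degree at most 1 never touches a sub-multigraph with all degrees even. -/
lemma mem_reduce_of_even {X : Finset α} {F : Multiset (Sym2 α)} (heven : ∀ a, Even (mdeg F a))
    {S : Finset α} {E : Multiset (Sym2 α)} (hFE : F ≤ E) {u : α} (hu : u ∈ S)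
    (hkeep : u ∈ X ∨ 0 < mdeg F u) : u ∈ reduce X 1 false S E := by
  induction S using Finset.strongInduction generalizing E with
  | H S ih =>
    rw [reduce]
    split_ifs with h
    · obtain ⟨hcS, hcX, hcdeg⟩ := h.choose_spec
      have hc0 : mdeg F h.choose = 0 := by
        have := mdeg_mono hFE h.choose
        obtain ⟨k, hk⟩ := heven h.choose
        omega
      refine ih _ (erase_ssubset hcS) ?_ (mem_erase.mpr ⟨?_, hu⟩)
      · simpa [nextE, Multiset.le_filter] using ⟨hFE, fun e he => mdeg_eq_zero_iff.mp hc0 e he⟩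
      · rintro rfl
        rcases hkeep with h | h
        exacts [hcX h, by omega]
    · exact hu

end Multidegree

section EvenSubgraphs

variable {V W : Type}

def HasEvenSubgraphOfDegree (k : ℕ) (G : SimpleGraph V) : Prop :=
  ∃ F : Finset (Sym2 V), ↑F ⊆ G.edgeSet ∧ (∀ w, Even (mdeg F.val w)) ∧ ∃ v, k ≤ mdeg F.val v

lemma mdeg_edgeFinset_val [Fintype V] (G : SimpleGraph V) (w : V) :
    mdeg G.edgeFinset.val w = G.degree w := by
  rw [mdeg_eq_card_filter (fun e he => G.not_isDiag_of_mem_edgeSet (by simpa using he)),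
    ← card_incidenceFinset_eq_degree, incidenceFinset_eq_filter]
  rfl

namespace HasEvenSubgraphOfDegree

lemma of_isFlower [Fintype V] {G : SimpleGraph V} {m : ℕ} (h : IsFlower m G) :
    HasEvenSubgraphOfDegree (2 * m) G := by
  obtain ⟨-, c, hc, hother⟩ := h
  refine ⟨G.edgeFinset, by simp, fun w => ?_, c, by rw [mdeg_edgeFinset_val, hc]⟩
  rw [mdeg_edgeFinset_val]
  by_cases hw : w = c
  · rw [hw, hc]; exact even_two_mul m
  · rw [hother w hw]; exact even_two

lemma mono {k : ℕ} {G G' : SimpleGraph V} (hle : G ≤ G') (h : HasEvenSubgraphOfDegree k G) :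
    HasEvenSubgraphOfDegree k G' := by
  obtain ⟨F, hF, heven, hdeg⟩ := h
  exact ⟨F, hF.trans (edgeSet_mono hle), heven, hdeg⟩

lemma map [Fintype V] {k : ℕ} {G : SimpleGraph V} {G' : SimpleGraph W} (f : G →g G')
    (hf : Function.Injective f) (h : HasEvenSubgraphOfDegree k G) :
    HasEvenSubgraphOfDegree k G' := by
  obtain ⟨F, hF, heven, v, hv⟩ := h
  refine ⟨F.map ⟨Sym2.map f, Sym2.map.injective hf⟩, ?_, fun w => ?_, f v, ?_⟩
  · simp only [coe_map, Function.Embedding.coeFn_mk, Set.image_subset_iff]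
    exact fun e he => f.map_mem_edgeSet (hF he)
  · rw [map_val, Function.Embedding.coeFn_mk, mdeg_map_sym2Map]
    exact Finset.even_sum _ fun u _ => heven u
  · rw [map_val, Function.Embedding.coeFn_mk, mdeg_map_sym2Map]
    exact hv.trans (Finset.single_le_sum (f := fun u => mdeg F.val u) (fun _ _ => Nat.zero_le _)
      (by simp))

/-- Reversing a lift: if the lifted edge `xz` is used, replace it by the path `x y z`; this adds
two to the degree of `y` and changes no other degree. -/
lemma of_lift {k : ℕ} {G : SimpleGraph V} {x y z : V} (hxy : G.Adj x y) (hyz : G.Adj y z)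
    (hxz : x ≠ z)
    (h : HasEvenSubgraphOfDegree k
      (fromEdgeSet ((G.edgeSet \ {s(x, y), s(y, z)}) ∪ {s(x, z)}))) :
    HasEvenSubgraphOfDegree k G := by
  obtain ⟨F, hF, heven, v, hv⟩ := h
  have hmem : ∀ e ∈ F, (e ∈ G.edgeSet ∧ e ≠ s(x, y) ∧ e ≠ s(y, z)) ∨ e = s(x, z) := fun e he => by
    have := hF he
    simp only [edgeSet_fromEdgeSet, Set.mem_sdiff, Set.mem_union, Set.mem_insert_iff,
      Set.mem_singleton_iff] at this
    tauto
  by_cases hxzF : s(x, z) ∉ F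
  · refine ⟨F, fun e he => ?_, heven, v, hv⟩
    rcases hmem e he with h | rfl
    exacts [h.1, absurd he hxzF]
  push Not at hxzF
  have hxyF : s(x, y) ∉ F := fun he => by
    rcases hmem _ he with h | h
    exacts [h.2.1 rfl, hyz.ne (Sym2.congr_right.mp h)]
  have hyzF : s(y, z) ∉ F := fun he => by
    rcases hmem _ he with h | h
    exacts [h.2.2 rfl, hxy.ne (Sym2.congr_left.mp h).symm]
  have hdeg : ∀ w, mdeg (insert s(x, y) (insert s(y, z) (F.erase s(x, z)))).val w =
      mdeg F.val w + 2 * (if y = w then 1 else 0) := by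
    intro w
    have hyz' : s(y, z) ∉ F.erase s(x, z) := fun h => hyzF (mem_of_mem_erase h)
    have hxy' : s(x, y) ∉ insert s(y, z) (F.erase s(x, z)) := by
      simp only [mem_insert, not_or]
      exact ⟨fun h => (Sym2.eq_iff.mp h).elim (fun h => hxy.ne h.1) (fun h => hxz h.1),
        fun h => hxyF (mem_of_mem_erase h)⟩
    have hFval : F.val = s(x, z) ::ₘ (F.erase s(x, z)).val := by
      rw [← insert_val_of_notMem (notMem_erase _ _), insert_erase hxzF]
    rw [insert_val_of_notMem hxy', insert_val_of_notMem hyz', hFval, mdeg_cons_mk, mdeg_cons_mk,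
      mdeg_cons_mk]
    have := hxy.ne
    have := hyz.ne
    split_ifs <;> grind
  refine ⟨insert s(x, y) (insert s(y, z) (F.erase s(x, z))), ?_, fun w => ?_, v, ?_⟩
  · intro e he
    simp only [coe_insert, Set.mem_insert_iff, mem_coe, mem_erase] at he
    rcases he with rfl | rfl | ⟨hne, he⟩
    exacts [hxy, hyz, ((hmem e he).resolve_right hne).1]
  · rw [hdeg]; exact (heven w).add (even_two_mul _)
  · rw [hdeg]; omega

lemma of_immStep {k : ℕ} {A B : FG} (hstep : ImmStep B A) (h : HasEvenSubgraphOfDegree k B.G) :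
    HasEvenSubgraphOfDegree k A.G := by
  cases hstep with
  | iso _ _ hφ => exact h.map hφ.some.toHom hφ.some.injective
  | delEdge _ e _ => exact h.mono (deleteEdges_le _)
  | delVertex _ v => exact h.map (Embedding.induce _).toHom Subtype.val_injective
  | lift _ x y z hxy hyz hxz => exact h.of_lift hxy hyz hxz

lemma of_immersion {k : ℕ} {H A : FG} (himm : Immersion H A) (h : HasEvenSubgraphOfDegree k H.G) :
    HasEvenSubgraphOfDegree k A.G := by
  induction himm with
  | refl => exact h
  | tail _ hstep ih => exact ih.of_immStep hstep

end HasEvenSubgraphOfDegree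
end EvenSubgraphs

namespace TCD

variable {V : Type} [Fintype V] {G : SimpleGraph V} (D : TCD G)

lemma mem_desc_self (t : Fin D.n) : t ∈ D.desc t := fun p => p.end_mem_support

lemma notMem_desc_iff {t s : Fin D.n} :
    s ∉ D.desc t ↔ ∃ p : D.T.Walk D.root s, t ∉ p.support := by
  simp [desc]

lemma notMem_desc_of_reachable {t : Fin D.n} {s s' : ({x | x ≠ t} : Set (Fin D.n))}
    (hr : (D.T.induce {x | x ≠ t}).Reachable s s') (hs : ↑s ∉ D.desc t) : ↑s' ∉ D.desc t := by
  obtain ⟨p, hp⟩ := D.notMem_desc_iff.mp hs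
  obtain ⟨q, hq⟩ := reachable_induce_ne_iff.mp hr
  exact D.notMem_desc_iff.mpr ⟨p.append q, by simp [Walk.mem_support_append_iff, hp, hq]⟩

lemma notMem_desc_of_walk {t c s : Fin D.n} (hs : s ∈ D.desc t) (hc : c ≠ t)
    (q : D.T.Walk c s) (hq : t ∉ q.support) : t ∉ D.desc c := by
  intro htc
  obtain ⟨P, hP, -⟩ := D.tree.existsUnique_path D.root t
  have hcP : c ∈ P.support := htc P
  have htP := Walk.endpoint_notMem_support_takeUntil hP hcP hc.symm
  exact (by simp [Walk.mem_support_append_iff, htP, hq] :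
    t ∉ ((P.takeUntil c hcP).append q).support) (hs _)

/-- Each component of `T - t` is, as a set of nodes, either the subtree of a child `c` of `t`
or the complement of the subtree of `t` (then take `c = t`). -/
lemma exists_mem_desc_iff_notMem_desc (t : Fin D.n) (C : D.Cmp t) :
    ∃ c, ∀ s : ({x | x ≠ t} : Set (Fin D.n)),
      (D.T.induce {x | x ≠ t}).connectedComponentMk s = C → (↑s ∈ D.desc c ↔ t ∉ D.desc c) := by
  obtain ⟨s₀, rfl⟩ := (C : (D.T.induce {x | x ≠ t}).ConnectedComponent).exists_rep
  by_cases h₀ : ↑s₀ ∈ D.desc t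
  · obtain ⟨W⟩ := D.tree.connected.preconnected D.root s₀
    obtain ⟨c, -, htc, q, hq⟩ := W.exists_adj_walk_notMem_support (h₀ W) s₀.2
    refine ⟨c, fun s hs => iff_of_true (fun W' => ?_) (D.notMem_desc_of_walk h₀ htc.ne' q hq)⟩
    have hr := ConnectedComponent.exact hs
    have hsd : ↑s ∈ D.desc t := not_not.mp fun h => D.notMem_desc_of_reachable hr h h₀
    obtain ⟨c', hc'W, htc', q', hq'⟩ := W'.exists_adj_walk_notMem_support (hsd W') s.2
    obtain ⟨r, hr⟩ := reachable_induce_ne_iff.mp hr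
    have hcc' := D.tree.isAcyclic.eq_of_adj_of_walk htc htc' (q'.append (r.append q.reverse))
      (by simp [Walk.mem_support_append_iff, hq', hr, hq])
    exact hcc' ▸ hc'W
  · refine ⟨t, fun s hs => iff_of_false ?_ (not_not.mpr (D.mem_desc_self t))⟩
    exact D.notMem_desc_of_reachable (ConnectedComponent.exact hs).symm h₀

lemma toTorso_of_mem_bag_s6 {t : Fin D.n} {u : V} (hu : u ∈ D.bag t) :
    D.toTorso t u = Sum.inl u := by
  rw [toTorso, dif_neg]
  rintro ⟨s, hs, hus⟩
  exact hs ((D.partition u).unique hus hu)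

lemma toTorso_of_mem_bag_of_ne {s t : Fin D.n} {u : V} (hu : u ∈ D.bag s) (hs : s ≠ t) :
    D.toTorso t u = Sum.inr ((D.T.induce {x | x ≠ t}).connectedComponentMk ⟨s, hs⟩) := by
  have hex : ∃ s, s ≠ t ∧ u ∈ D.bag s := ⟨s, hs, hu⟩
  rw [toTorso, dif_pos hex]
  congr
  exact (D.partition u).unique hex.choose_spec.2 hu

lemma mem_Y_iff_s6 {s c : Fin D.n} {u : V} (hu : u ∈ D.bag s) : u ∈ D.Y c ↔ s ∈ D.desc c := by
  simp only [Y, mem_filter, mem_univ, true_and]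
  exact ⟨fun ⟨s', hs', hus'⟩ => (D.partition u).unique hu hus' ▸ hs', fun h => ⟨s, h, hu⟩⟩

lemma exists_mem_Y_iff_notMem_Y (t : Fin D.n) (C : D.Cmp t) :
    ∃ c, ∀ u w, D.toTorso t u = Sum.inr C → w ∈ D.bag t → (u ∈ D.Y c ↔ w ∉ D.Y c) := by
  obtain ⟨c, hc⟩ := D.exists_mem_desc_iff_notMem_desc t C
  refine ⟨c, fun u w hu hw => ?_⟩
  obtain ⟨s, hus, -⟩ := D.partition u
  have hst : s ≠ t := by
    rintro rfl
    exact Sum.inl_ne_inr (D.toTorso_of_mem_bag_s6 hus ▸ hu)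
  rw [D.toTorso_of_mem_bag_of_ne hus hst] at hu
  rw [D.mem_Y_iff_s6 hus, D.mem_Y_iff_s6 hw]
  exact hc ⟨s, hst⟩ (Sum.inr_injective hu)

lemma card_le_adh {c : Fin D.n} {v : V} {P : Finset V}
    (hP : ∀ u ∈ P, G.Adj v u ∧ (u ∈ D.Y c ↔ v ∉ D.Y c)) : #P ≤ D.adh c := by
  refine card_le_card_of_injOn (fun u => s(v, u)) (fun u hu => ?_)
    (fun u _ u' _ h => Sym2.congr_right.mp h)
  obtain ⟨hadj, hY⟩ := hP u hu
  simp only [coe_filter, mem_univ, true_and, Set.mem_ofPred_eq, mem_edgeSet]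
  refine ⟨hadj, ?_⟩
  by_cases hv : v ∈ D.Y c
  · exact ⟨v, u, rfl, hv, fun hu => hY.mp hu hv⟩
  · exact ⟨u, v, Sym2.eq_swap, hY.mpr hv, hv⟩

lemma adh_le_slimWidth (c : Fin D.n) : D.adh c ≤ D.slimWidth :=
  (le_max_left _ _).trans (le_sup (f := fun s => max (D.adh s) (D.tor2 s)) (mem_univ c))

lemma tor2_le_slimWidth (c : Fin D.n) : D.tor2 c ≤ D.slimWidth :=
  (le_max_right _ _).trans (le_sup (f := fun s => max (D.adh s) (D.tor2 s)) (mem_univ c))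

lemma exists_toTorso_eq_inr {t : Fin D.n} {u : V} (hu : u ∉ D.bag t) :
    ∃ C, D.toTorso t u = Sum.inr C := by
  obtain ⟨s, hus, -⟩ := D.partition u
  exact ⟨_, D.toTorso_of_mem_bag_of_ne hus (by rintro rfl; exact hu hus)⟩

def torsoImage (t : Fin D.n) (F : Finset (Sym2 V)) : Multiset (Sym2 (V ⊕ D.Cmp t)) :=
  (F.val.map (Sym2.map (D.toTorso t))).filter fun e => ¬ e.IsDiag

lemma torsoImage_le_torsoE {t : Fin D.n} {F : Finset (Sym2 V)} (hF : ↑F ⊆ G.edgeSet) :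
    D.torsoImage t F ≤ D.torsoE t :=
  Multiset.filter_le_filter _ <| Multiset.map_le_map <|
    Finset.val_le_iff.mpr fun e he => by simpa using hF he

lemma even_mdeg_torsoImage {t : Fin D.n} {F : Finset (Sym2 V)}
    (heven : ∀ w, Even (mdeg F.val w)) (a : V ⊕ D.Cmp t) : Even (mdeg (D.torsoImage t F) a) := by
  rw [torsoImage, even_mdeg_filter_not_isDiag_iff, mdeg_map_sym2Map]
  exact even_sum _ fun u _ => heven u

lemma card_le_tor2 {t : Fin D.n} {F : Finset (Sym2 V)} (hF : ↑F ⊆ G.edgeSet)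
    (heven : ∀ w, Even (mdeg F.val w)) {S : Finset (V ⊕ D.Cmp t)}
    (hS : ∀ a ∈ S, a ∈ D.torsoS t ∧
      (a ∈ (D.bag t).image Sum.inl ∨ 0 < mdeg (D.torsoImage t F) a)) :
    #S ≤ D.tor2 t :=
  card_le_card fun a ha => mem_reduce_of_even (D.even_mdeg_torsoImage heven)
    (D.torsoImage_le_torsoE hF) (hS a ha).1 (hS a ha).2

/-- Every component of `T - t` met by an `F`-edge at `v` survives in the 2-center at `t`. -/
lemma card_bag_add_card_image_le {t : Fin D.n} {v : V} (hv : v ∈ D.bag t)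
    {F : Finset (Sym2 V)} (hF : ↑F ⊆ G.edgeSet) (heven : ∀ w, Even (mdeg F.val w))
    {P : Finset V} (hP : ∀ u ∈ P, s(v, u) ∈ F ∧ u ∉ D.bag t) :
    #(D.bag t) + #(P.image (D.toTorso t)) ≤ D.slimWidth := by
  have hdisj : Disjoint ((D.bag t).image Sum.inl) (P.image (D.toTorso t)) := by
    refine disjoint_left.mpr fun a ha ha' => ?_
    obtain ⟨x, -, rfl⟩ := mem_image.mp ha
    obtain ⟨u, hu, hux⟩ := mem_image.mp ha'
    obtain ⟨C, hC⟩ := D.exists_toTorso_eq_inr (hP u hu).2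
    exact Sum.inr_ne_inl (hC ▸ hux)
  rw [← card_image_of_injective _ (Sum.inl_injective (β := D.Cmp t)),
    ← card_union_of_disjoint hdisj]
  refine (D.card_le_tor2 hF heven fun a ha => ?_).trans (D.tor2_le_slimWidth t)
  rcases mem_union.mp ha with ha | ha
  · exact ⟨mem_union_left _ ha, Or.inl ha⟩
  obtain ⟨u, hu, rfl⟩ := mem_image.mp ha
  obtain ⟨C, hC⟩ := D.exists_toTorso_eq_inr (hP u hu).2
  refine ⟨hC ▸ mem_union_right _ (mem_image_of_mem _ (mem_univ C)), Or.inr ?_⟩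
  have hmem : s(Sum.inl v, D.toTorso t u) ∈ D.torsoImage t F := by
    refine Multiset.mem_filter.mpr ⟨?_, by simp [hC]⟩
    rw [← D.toTorso_of_mem_bag_s6 hv, ← Sym2.map_mk]
    exact Multiset.mem_map_of_mem _ (hP u hu).1
  exact Nat.pos_of_ne_zero fun h => mdeg_eq_zero_iff.mp h _ hmem (Sym2.mem_mk_right _ _)

/-- Edges from `v` into one component of `T - t` all cross the adhesion of a single node. -/
lemma card_filter_toTorso_eq_inr_le {t : Fin D.n} {v : V} (hv : v ∈ D.bag t) {P : Finset V}
    (hP : ∀ u ∈ P, G.Adj v u) (C : D.Cmp t) :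
    #{u ∈ P | D.toTorso t u = Sum.inr C} ≤ D.slimWidth := by
  obtain ⟨c, hc⟩ := D.exists_mem_Y_iff_notMem_Y t C
  refine (D.card_le_adh (v := v) fun u hu => ?_).trans (D.adh_le_slimWidth c)
  rw [mem_filter] at hu
  exact ⟨hP u hu.1, hc u v hu.2 hv⟩

theorem mdeg_lt_slimWidth_sq {F : Finset (Sym2 V)} (hF : ↑F ⊆ G.edgeSet)
    (heven : ∀ w, Even (mdeg F.val w)) (v : V) : mdeg F.val v < D.slimWidth ^ 2 := by
  obtain ⟨t, hvt, -⟩ := D.partition v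
  set N : Finset V := {u | s(v, u) ∈ F}
  have hadj : ∀ u ∈ N, G.Adj v u := fun u hu => hF (mem_filter.mp hu).2
  have hin : #{u ∈ N | u ∈ D.bag t} + 1 ≤ #(D.bag t) := by
    rw [← card_erase_add_one hvt]
    gcongr
    intro u hu
    rw [mem_filter] at hu
    exact mem_erase.mpr ⟨(hadj u hu.1).ne', hu.2⟩
  set Nout := {u ∈ N | u ∉ D.bag t}
  have hout : #Nout ≤ D.slimWidth * #(Nout.image (D.toTorso t)) := by
    refine card_le_mul_card_image _ _ fun a ha => ?_
    obtain ⟨u, hu, rfl⟩ := mem_image.mp ha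
    obtain ⟨C, hC⟩ := D.exists_toTorso_eq_inr (mem_filter.mp hu).2
    rw [hC]
    exact D.card_filter_toTorso_eq_inr_le hvt (fun u hu => hadj u (mem_filter.mp hu).1) C
  have hcenter := D.card_bag_add_card_image_le hvt hF heven (P := Nout)
    fun u hu => ⟨(mem_filter.mp (mem_filter.mp hu).1).2, (mem_filter.mp hu).2⟩
  rw [mdeg_val_eq_card_filter_mk_mem (fun e he => G.not_isDiag_of_mem_edgeSet (hF he)),
    ← card_filter_add_card_filter_not (· ∈ D.bag t)]
  nlinarith

def singleton (G : SimpleGraph V) : TCD G where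
  n := 1
  T := ⊥
  tree := .of_subsingleton
  root := 0
  bag _ := univ
  partition v := ⟨0, mem_univ v, fun s _ => Subsingleton.elim s 0⟩

end TCD

lemma exists_slimWidth_le_stcw {V : Type} [Fintype V] (G : SimpleGraph V) :
    ∃ D : TCD G, D.slimWidth ≤ stcw G :=
  Nat.sInf_mem (s := {k | ∃ D : TCD G, D.slimWidth ≤ k}) ⟨_, TCD.singleton G, le_rfl⟩

/-- if `stcw(G) < r` then `G` does not contain as a weak immersion `r²`
cycles intersecting at one vertex which are otherwise pairwise vertex-disjoint. -/
theorem stmt6 {V : Type} [Fintype V] (G : SimpleGraph V) (r : ℕ) (h : stcw G < r) :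
    ¬ ∃ H : FG, IsFlower (r ^ 2) H.G ∧ Immersion H (FG.mk V G) := by
  rintro ⟨H, hflower, himm⟩
  obtain ⟨F, hF, heven, v, hv⟩ := (HasEvenSubgraphOfDegree.of_isFlower hflower).of_immersion himm
  obtain ⟨D, hD⟩ := exists_slimWidth_le_stcw G
  have hlt := D.mdeg_lt_slimWidth_sq hF heven v
  have hsq : D.slimWidth ^ 2 < r ^ 2 := Nat.pow_lt_pow_left (hD.trans_lt h) two_ne_zero
  omega

end PaperSTCW
end
end
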